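/- Let (K, δ*) be an iterative q-difference field with constants C. If x₁, …, x_r ∈ K are linearly independent over C, then there exist natural numbers d₁, …, d_r such that the Wronskian-type determinant det((δ^{(d_i)}(x_j))_{i,j=1}^r) is nonzero. -/

import Mathlib

/-- The Gaussian (q-)binomial coefficient, defined by the q-Pascal recursion. -/
def qbinom {R : Type*} [CommRing R] (q : R) : ℕ → ℕ → R
  | _, 0 => 1
  | 0, _ + 1 => 0
  | n + 1, k + 1 => qbinom q n k + q ^ (k + 1) * qbinom q n (k + 1)

/-- An iterative `q`-difference ring structure on a commutative ring `R`,
relative to distinguished elements `q` and `t` of `R` (the images of the root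
of unity `q ∈ C` and of the variable `t ∈ C(t)`).  It consists of a ring
automorphism `σ` (extending `f(t) ↦ f(qt)`) and a family of additive maps
`δ^{(k)}` satisfying `δ^{(0)} = id`, `δ^{(1)} = (σ − id)/((q−1)t)`, the twisted
Leibniz rule, and the iteration rule
`δ^{(i)} ∘ δ^{(j)} = [i+j, i]_q δ^{(i+j)}`. -/
structure IDqRing (R : Type*) [CommRing R] (q t : R) where
  σ : R ≃+* R
  δ : ℕ → R →+ R
  δ_zero : ∀ a : R, δ 0 a = a
  δ_one : ∀ a : R, (q - 1) * t * δ 1 a = σ a - a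
  σ_q : σ q = q
  σ_t : σ t = q * t
  δ_q : ∀ k, 0 < k → δ k q = 0
  δ_t : ∀ k, 1 < k → δ k t = 0
  leibniz : ∀ (k : ℕ) (a b : R),
    δ k (a * b) = ∑ ij ∈ Finset.HasAntidiagonal.antidiagonal k, (⇑σ)^[ij.1] (δ ij.2 a) * δ ij.1 b
  iter : ∀ (i j : ℕ) (a : R), δ i (δ j a) = qbinom q (i + j) i * δ (i + j) a

/-!
If every Wronskian vanished, the rows `(δ^{(m)} x_j)_j`, `m ∈ ℕ`, would not span `K^r`, so some
nonzero `c` would satisfy `∑ c_j δ^{(m)} x_j = 0` for all `m`. Take such a `c` of minimal support,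
normalised by `c_{j₀} = 1`. Because `σ (δ^{(m)} x) = δ^{(m)} x + (q - 1) t [m+1]_q δ^{(m+1)} x`, the row
space is `σ`-stable, so `σ⁻¹ c` is again a solution; and by the twisted Leibniz rule, once `σ c = c`
and `δ^{(l)} c = 0` for `0 < l < k`, so is `δ^{(k)} c`. Both `σ⁻¹ c - c` and `δ^{(k)} c` vanish at `j₀`
and are supported inside the support of `c`, hence are zero by minimality. So `c` is constant,
and the row `m = 0` is a nontrivial relation among the `x_j` with constant coefficients.
-/

open Finset Matrix

theorem Matrix.exists_det_submatrix_ne_zero_of_span_eq_top {α ι K : Type*} [Fintype ι]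
    [DecidableEq ι] [Field K] (M : Matrix α ι K) (hM : Submodule.span K (Set.range M) = ⊤) :
    ∃ d : ι → α, (M.submatrix d id).det ≠ 0 := by
  obtain ⟨s, hsM, hs_span, hs_li⟩ := exists_linearIndependent K (Set.range M)
  let B : Module.Basis s K (ι → K) := .mk hs_li (by rw [Subtype.range_coe, hs_span, hM])
  let e : ι ≃ s := (Pi.basisFun K ι).indexEquiv B
  choose d hd using fun i => hsM (e i).2
  have hrows : LinearIndependent K (M.submatrix d id) := by
    have : M.submatrix d id = (↑) ∘ e := funext hd
    rw [this]
    exact hs_li.comp e e.injective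
  exact ⟨d, ((isUnit_iff_isUnit_det _).mp (linearIndependent_rows_iff_isUnit.mp hrows)).ne_zero⟩

theorem Matrix.ker_mulVecLin_ne_bot_of_span_ne_top {α ι K : Type*} [Fintype ι] [DecidableEq ι]
    [Field K] (M : Matrix α ι K) (hM : Submodule.span K (Set.range M) ≠ ⊤) :
    LinearMap.ker M.mulVecLin ≠ ⊥ := by
  obtain ⟨f, hf0, hle⟩ := (Submodule.span K (Set.range M)).exists_le_ker_of_lt_top hM.lt_top
  refine (Submodule.ne_bot_iff _).mpr ⟨(dotProductEquiv K ι).symm f, ?_, by simpa using hf0⟩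
  ext m
  rw [mulVecLin_apply, Pi.zero_apply, mulVec, dotProduct_comm, ← dotProductEquiv_apply_apply,
    LinearEquiv.apply_symm_apply]
  exact hle (Submodule.subset_span ⟨m, rfl⟩)

theorem Matrix.ker_mulVecLin_ne_bot_of_forall_det_submatrix_eq_zero {α ι K : Type*} [Fintype ι]
    [DecidableEq ι] [Field K] (M : Matrix α ι K) (h : ∀ d : ι → α, (M.submatrix d id).det = 0) :
    LinearMap.ker M.mulVecLin ≠ ⊥ :=
  M.ker_mulVecLin_ne_bot_of_span_ne_top fun hM =>
    let ⟨d, hd⟩ := M.exists_det_submatrix_ne_zero_of_span_eq_top hM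
    hd (h d)

theorem Submodule.exists_normalized_of_minimal_support {ι K : Type*} [Fintype ι] [Field K]
    (A : Submodule K (ι → K)) (hA : A ≠ ⊥) :
    ∃ b ∈ A, ∃ j₀, b j₀ = 1 ∧ ∀ e ∈ A, e j₀ = 0 → (∀ j, b j = 0 → e j = 0) → e = 0 := by
  classical
  obtain ⟨c, ⟨hcA, hc0⟩, hmin⟩ := (measure fun c : ι → K => #{j | c j ≠ 0}).wf.has_min
    {c | c ∈ A ∧ c ≠ 0} ((Submodule.ne_bot_iff A).mp hA)
  obtain ⟨j₀, hj₀⟩ : ∃ j, c j ≠ 0 := Function.ne_iff.mp hc0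
  refine ⟨(c j₀)⁻¹ • c, A.smul_mem _ hcA, j₀, inv_mul_cancel₀ hj₀, fun e heA hej₀ hsupp => ?_⟩
  by_contra he0
  refine hmin e ⟨heA, he0⟩ (card_lt_card ((ssubset_iff_of_subset fun j => ?_).mpr ?_))
  · simp only [mem_filter, mem_univ, true_and]
    exact fun hej hcj => hej (hsupp j (by simp [hcj]))
  · exact ⟨j₀, by simp [hj₀, hej₀]⟩

namespace IDqRing

section CommRing

variable {R : Type*} [CommRing R] {q t : R} (D : IDqRing R q t)

theorem sigma_delta (k : ℕ) (a : R) :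
    D.σ (D.δ k a) = D.δ k a + (q - 1) * t * qbinom q (k + 1) 1 * D.δ (k + 1) a := by
  have h := D.iter 1 k a
  rw [add_comm 1 k] at h
  linear_combination -D.δ_one (D.δ k a) + (q - 1) * t * h

theorem delta_mul_of_sigma_eq {k : ℕ} (hk : 0 < k) {a : R} (hσ : D.σ a = a)
    (hδ : ∀ l, 0 < l → l < k → D.δ l a = 0) (b : R) :
    D.δ k (a * b) = D.δ k a * b + a * D.δ k b := by
  rw [D.leibniz, sum_eq_add_of_mem (k, 0) (0, k) (by simp) (by simp) (by simp [hk.ne'])]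
  · simp only [D.δ_zero, Function.iterate_fixed hσ, Function.iterate_zero_apply]
    ring
  · rintro ⟨i, l⟩ hil ⟨hk0, h0k⟩
    rw [HasAntidiagonal.mem_antidiagonal] at hil
    have hl : 0 < l ∧ l < k := by
      simp only [ne_eq, Prod.mk.injEq] at hk0 h0k
      omega
    rw [hδ l hl.1 hl.2, Function.iterate_fixed (map_zero D.σ), zero_mul]

theorem delta_one_of_pos {k : ℕ} (hk : 0 < k) : D.δ k 1 = 0 := by
  induction k using Nat.strong_induction_on with
  | _ k ih =>
    have h := D.delta_mul_of_sigma_eq hk (map_one D.σ) (fun l hl hlk => ih l hlk hl) 1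
    simpa using h

/-- The Wronskians `det (δ^{(d_i)} x_j)` are the determinants of its square row-submatrices. -/
def wronskiMatrix {ι : Type*} (x : ι → R) : Matrix ℕ ι R :=
  Matrix.of fun m j => D.δ m (x j)

variable {ι : Type*} [Fintype ι] (x : ι → R)

theorem wronskiMatrix_mulVec_apply (c : ι → R) (m : ℕ) :
    (D.wronskiMatrix x *ᵥ c) m = ∑ j, D.δ m (x j) * c j :=
  rfl

theorem wronskiMatrix_mulVec_sigma_symm {c : ι → R} (hc : D.wronskiMatrix x *ᵥ c = 0) :
    D.wronskiMatrix x *ᵥ (D.σ.symm ∘ c) = 0 := by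
  ext m
  apply D.σ.injective
  calc D.σ ((D.wronskiMatrix x *ᵥ (D.σ.symm ∘ c)) m)
      = (D.wronskiMatrix x *ᵥ c) m
        + (q - 1) * t * qbinom q (m + 1) 1 * (D.wronskiMatrix x *ᵥ c) (m + 1) := by
        simp only [wronskiMatrix_mulVec_apply, map_sum, map_mul, Function.comp_apply,
          RingEquiv.apply_symm_apply, sigma_delta, add_mul, sum_add_distrib, mul_sum, mul_assoc]
    _ = D.σ ((0 : ℕ → R) m) := by simp [hc]

theorem wronskiMatrix_mulVec_delta {k : ℕ} (hk : 0 < k) {c : ι → R}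
    (hc : D.wronskiMatrix x *ᵥ c = 0) (hσ : ∀ j, D.σ (c j) = c j)
    (hδ : ∀ l, 0 < l → l < k → ∀ j, D.δ l (c j) = 0) :
    D.wronskiMatrix x *ᵥ (fun j => D.δ k (c j)) = 0 := by
  ext m
  have key : D.δ k ((D.wronskiMatrix x *ᵥ c) m)
      = (D.wronskiMatrix x *ᵥ fun j => D.δ k (c j)) m
        + qbinom q (k + m) k * (D.wronskiMatrix x *ᵥ c) (k + m) := by
    simp only [wronskiMatrix_mulVec_apply, map_sum, mul_sum, ← sum_add_distrib]
    refine sum_congr rfl fun j _ => ?_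
    rw [mul_comm, D.delta_mul_of_sigma_eq hk (hσ j) (fun l hl hlk => hδ l hl hlk j), D.iter]
    ring
  simpa [hc] using key.symm

end CommRing

theorem exists_constants_wronskiMatrix_mulVec_eq_zero {K : Type*} [Field K] {q t : K}
    (D : IDqRing K q t) {ι : Type*} [Fintype ι] (x : ι → K)
    (h : LinearMap.ker (D.wronskiMatrix x).mulVecLin ≠ ⊥) :
    ∃ b ≠ 0, D.wronskiMatrix x *ᵥ b = 0 ∧ ∀ j k, 0 < k → D.δ k (b j) = 0 := by
  obtain ⟨b, hb, j₀, hbj₀, hmin⟩ := Submodule.exists_normalized_of_minimal_support _ h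
  simp only [LinearMap.mem_ker, mulVecLin_apply] at hb hmin
  have hσ : ∀ j, D.σ (b j) = b j := by
    have h0 : D.σ.symm ∘ b - b = 0 :=
      hmin _ (by rw [mulVec_sub, D.wronskiMatrix_mulVec_sigma_symm x hb, hb, sub_zero])
        (by simp [hbj₀]) (fun j hj => by simp [hj])
    intro j
    have hj := congrFun h0 j
    rw [Pi.sub_apply, Function.comp_apply, Pi.zero_apply, sub_eq_zero, D.σ.symm_apply_eq] at hj
    exact hj.symm
  have hconst : ∀ k, 0 < k → ∀ j, D.δ k (b j) = 0 := by
    intro k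
    induction k using Nat.strong_induction_on with
    | _ k ih =>
      intro hk
      exact congrFun (hmin _ (D.wronskiMatrix_mulVec_delta x hk hb hσ fun l hl hlk => ih l hlk hl)
        (by simp [hbj₀, D.delta_one_of_pos hk]) (fun j hj => by simp [hj]))
  exact ⟨b, fun h0 => by simp [h0] at hbj₀, hb, fun j k hk => hconst k hk j⟩

end IDqRing

/-- In an iterative `q`-difference field `K` with constants `C`, if `x₁, …, x_r`
are linearly independent over the constants, then there are natural numbers
`d₁, …, d_r` such that the Wronskian-type determinant
`det((δ^{(d_i)}(x_j))_{i,j})` is nonzero. -/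
theorem exists_wronskian_ne_zero {K : Type*} [Field K] (q t : K)
    (D : IDqRing K q t) (r : ℕ) (x : Fin r → K)
    (hx : ∀ c : Fin r → K, (∀ i, ∀ k, 0 < k → D.δ k (c i) = 0) →
      ∑ i, c i * x i = 0 → ∀ i, c i = 0) :
    ∃ d : Fin r → ℕ, (Matrix.of fun i j => D.δ (d i) (x j)).det ≠ 0 := by
  by_contra! h
  obtain ⟨b, hb0, hb, hconst⟩ := D.exists_constants_wronskiMatrix_mulVec_eq_zero x
    ((D.wronskiMatrix x).ker_mulVecLin_ne_bot_of_forall_det_submatrix_eq_zero h)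
  have hsum : ∑ i, b i * x i = 0 := by
    simpa [D.wronskiMatrix_mulVec_apply, D.δ_zero, mul_comm] using congrFun hb 0
  exact hb0 (funext (hx b hconst hsum))
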